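/- arXiv:0902.0382 — 3 statements merged into one kernel-verified Lean document; each statement's English description precedes it below -/
import Mathlib

section
/- If a finite strategic game admits an exact potential function, then every sink equilibrium of its state graph is a singleton, and hence every sink equilibrium is a pure Nash equilibrium. -/
/-- An edge of the state graph: `S'` differs from `S` only in player `i`'s
coordinate and player `i` strictly improves. -/
def Edge {ι : Type*} [DecidableEq ι] {σ : ι → Type*}
    (u : ∀ i : ι, (∀ j, σ j) → ℝ) (S S' : ∀ j, σ j) : Prop :=
  ∃ i, (∃ s' : σ i, S' = Function.update S i s') ∧ u i S' > u i S

/-- Reachability in the state graph. -/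
def Reach {ι : Type*} [DecidableEq ι] {σ : ι → Type*}
    (u : ∀ i : ι, (∀ j, σ j) → ℝ) : (∀ j, σ j) → (∀ j, σ j) → Prop :=
  Relation.ReflTransGen (Edge u)

/-- A sink equilibrium: a strongly connected component (a mutual-reachability
equivalence class) with no outgoing edges. -/
def IsSinkEq {ι : Type*} [DecidableEq ι] {σ : ι → Type*}
    (u : ∀ i : ι, (∀ j, σ j) → ℝ) (C : Set (∀ j, σ j)) : Prop :=
  (∃ S ∈ C, C = {T | Reach u S T ∧ Reach u T S}) ∧
  ∀ S ∈ C, ∀ T, Edge u S T → T ∈ C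

/-- A pure Nash equilibrium: no player has a strictly improving deviation. -/
def IsPNE {ι : Type*} [DecidableEq ι] {σ : ι → Type*}
    (u : ∀ i : ι, (∀ j, σ j) → ℝ) (S : ∀ j, σ j) : Prop :=
  ∀ (i : ι) (s' : σ i), u i (Function.update S i s') ≤ u i S

/-- In a game with an exact potential, every sink equilibrium is a singleton
consisting of a pure Nash equilibrium. -/
theorem potential_sink_singleton {ι : Type*} [Fintype ι] [DecidableEq ι]
    {σ : ι → Type*} [∀ i, Fintype (σ i)] [∀ i, Nonempty (σ i)]
    (u : ∀ i : ι, (∀ j, σ j) → ℝ) (Φ : (∀ j, σ j) → ℝ)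
    (hΦ : ∀ (S : ∀ j, σ j) (i : ι) (s' : σ i),
      u i (Function.update S i s') - u i S = Φ (Function.update S i s') - Φ S)
    (C : Set (∀ j, σ j)) (hC : IsSinkEq u C) :
    ∃ S, C = {S} ∧ IsPNE u S := by
  -- Each edge strictly increases Φ.
  have hedge : ∀ S T, Edge u S T → Φ S < Φ T := by
    rintro S T ⟨i, ⟨s', rfl⟩, hlt⟩
    have := hΦ S i s'
    linarith
  -- Reachability: Φ weakly increases, strictly unless equal.
  have hreach : ∀ S T, Reach u S T → S = T ∨ Φ S < Φ T := by
    intro S T h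
    induction h with
    | refl => exact Or.inl rfl
    | tail _ hST ih =>
      rcases ih with rfl | hlt
      · exact Or.inr (hedge _ _ hST)
      · exact Or.inr (lt_trans hlt (hedge _ _ hST))
  obtain ⟨⟨S, hS, hCeq⟩, hclosed⟩ := hC
  have hsingle : C = {S} := by
    rw [hCeq]
    ext T
    simp only [Set.mem_setOf_eq, Set.mem_singleton_iff]
    constructor
    · rintro ⟨h1, h2⟩
      rcases hreach _ _ h1 with rfl | hlt1
      · rfl
      · rcases hreach _ _ h2 with rfl | hlt2
        · rfl
        · linarith
    · rintro rfl; exact ⟨Relation.ReflTransGen.refl, Relation.ReflTransGen.refl⟩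
  refine ⟨S, hsingle, ?_⟩
  intro i s'
  by_contra h
  push_neg at h
  have he : Edge u S (Function.update S i s') := ⟨i, ⟨s', rfl⟩, h⟩
  have hmem : Function.update S i s' ∈ C := hclosed S hS _ he
  rw [hsingle, Set.mem_singleton_iff] at hmem
  rw [hmem] at h
  exact lt_irrefl _ h
end

section
/- In a finite strategic game with an exact potential function, every sequence of strictly improving unilateral deviations is finite; in particular, the state graph is acyclic. -/
/-- In a finite game with an exact potential, there is no infinite sequence of
strictly improving deviations; in particular, the state graph is acyclic. -/
theorem potential_game_fip {ι : Type*} [Fintype ι] [DecidableEq ι]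
    {σ : ι → Type*} [∀ i, Fintype (σ i)] [∀ i, Nonempty (σ i)]
    (u : ∀ i : ι, (∀ j, σ j) → ℝ) (Φ : (∀ j, σ j) → ℝ)
    (hΦ : ∀ (S : ∀ j, σ j) (i : ι) (s' : σ i),
      u i (Function.update S i s') - u i S = Φ (Function.update S i s') - Φ S) :
    (¬ ∃ f : ℕ → (∀ j, σ j), ∀ n, Edge u (f n) (f (n + 1))) ∧
    (∀ S, ¬ Relation.TransGen (Edge u) S S) := by
  have key : ∀ S S', Edge u S S' → Φ S < Φ S' := by
    rintro S S' ⟨i, ⟨s', rfl⟩, h⟩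
    have := hΦ S i s'
    linarith
  constructor
  · rintro ⟨f, hf⟩
    have hmono : StrictMono (fun n => Φ (f n)) :=
      strictMono_nat_of_lt_succ fun n => key _ _ (hf n)
    have : (Set.range (fun n => Φ (f n))).Infinite :=
      Set.infinite_range_of_injective hmono.injective
    exact this ((Set.finite_range Φ).subset (Set.range_comp_subset_range f Φ))
  · have gen : ∀ S T, Relation.TransGen (Edge u) S T → Φ S < Φ T := by
      intro S T hST
      induction hST with
      | single h => exact key _ _ h
      | tail _ h ih => exact ih.trans (key _ _ h)
    exact fun S hS => lt_irrefl _ (gen S S hS)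
end

section
/- Every finite unweighted congestion game possesses a pure Nash equilibrium. -/
/-- The congestion of resource `e` in profile `S`. `st i` maps a strategy of
player `i` to the set of resources it uses. -/
def congestion {ι E : Type*} [Fintype ι] [DecidableEq E] {σ : ι → Type*}
    (st : ∀ i, σ i → Finset E) (S : ∀ i, σ i) (e : E) : ℕ :=
  (Finset.univ.filter fun i : ι => e ∈ st i (S i)).card

/-- The cost of player `i`: the sum of delays over the resources she uses. -/
def cost {ι E : Type*} [Fintype ι] [DecidableEq E] {σ : ι → Type*}
    (st : ∀ i, σ i → Finset E) (d : E → ℕ → ℤ) (S : ∀ i, σ i) (i : ι) : ℤ :=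
  ∑ e ∈ st i (S i), d e (congestion st S e)

/-- Every finite unweighted congestion game possesses a pure Nash equilibrium:
a profile where no player can strictly decrease her cost by a unilateral
change of strategy. -/
theorem congestion_game_has_pne {ι E : Type*} [Fintype ι] [DecidableEq ι]
    [Fintype E] [DecidableEq E] {σ : ι → Type*}
    [∀ i, Fintype (σ i)] [∀ i, Nonempty (σ i)]
    (st : ∀ i, σ i → Finset E) (d : E → ℕ → ℤ) :
    ∃ S : ∀ i, σ i, ∀ (i : ι) (s' : σ i),
      cost st d S i ≤ cost st d (Function.update S i s') i := by
  classical
  -- Rosenthal's potential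
  set φ : (∀ i, σ i) → ℤ :=
    fun S => ∑ e, ∑ k ∈ Finset.Icc 1 (congestion st S e), d e k with hφ
  obtain ⟨S, hS⟩ := Finite.exists_min φ
  refine ⟨S, fun i s' => ?_⟩
  set S' := Function.update S i s' with hS'def
  -- congestion ignoring player i
  set m : E → ℕ :=
    fun e => ((Finset.univ.erase i).filter fun j => e ∈ st j (S j)).card with hm
  have hcong : ∀ (T : ∀ j, σ j), (∀ j ∈ Finset.univ.erase i, T j = S j) →
      ∀ e, congestion st T e = m e + (if e ∈ st i (T i) then 1 else 0) := by
    intro T hT e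
    have huniv : (Finset.univ : Finset ι) = insert i (Finset.univ.erase i) := by
      simp [Finset.insert_erase (Finset.mem_univ i)]
    have hmeq : ((Finset.univ.erase i).filter fun j => e ∈ st j (T j)).card = m e := by
      apply congrArg
      apply Finset.filter_congr
      intro j hj
      rw [hT j hj]
    rw [congestion, huniv, Finset.filter_insert]
    split_ifs with h
    · rw [Finset.card_insert_of_notMem
        (fun hmem => (Finset.mem_erase.mp (Finset.mem_filter.mp hmem).1).1 rfl), hmeq]
    · rw [hmeq]; omega
  have hS'erase : ∀ j ∈ Finset.univ.erase i, S' j = S j := by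
    intro j hj
    exact Function.update_of_ne (Finset.mem_erase.mp hj).1 _ _
  have hcS : ∀ e, congestion st S e = m e + (if e ∈ st i (S i) then 1 else 0) :=
    hcong S (fun _ _ => rfl)
  have hcS' : ∀ e, congestion st S' e = m e + (if e ∈ st i s' then 1 else 0) := by
    have h := hcong S' hS'erase
    simpa [hS'def] using h
  have hcost : ∀ (T : ∀ j, σ j) (A : Finset E), st i (T i) = A →
      (∀ e, congestion st T e = m e + (if e ∈ A then 1 else 0)) →
      cost st d T i = ∑ e, (if e ∈ A then d e (m e + 1) else 0) := by
    intro T A hA hc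
    rw [Finset.sum_ite_mem, Finset.univ_inter, cost, hA]
    apply Finset.sum_congr rfl
    intro e he
    rw [hc e, if_pos he]
  have h1 : cost st d S i = ∑ e, (if e ∈ st i (S i) then d e (m e + 1) else 0) :=
    hcost S _ rfl hcS
  have h2 : cost st d S' i = ∑ e, (if e ∈ st i s' then d e (m e + 1) else 0) := by
    apply hcost S' _ _ hcS'
    rw [hS'def, Function.update_self]
  have key : φ S' - φ S = cost st d S' i - cost st d S i := by
    rw [h1, h2, hφ]
    simp only
    rw [← Finset.sum_sub_distrib, ← Finset.sum_sub_distrib]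
    apply Finset.sum_congr rfl
    intro e _
    rw [hcS e, hcS' e]
    split_ifs with ha hb hb
    · ring
    · rw [Finset.sum_Icc_succ_top (by omega : 1 ≤ m e + 1)]
      ring
    · rw [Finset.sum_Icc_succ_top (by omega : 1 ≤ m e + 1)]
      ring
    · ring
  have := hS S'
  linarith [key]
end
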